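/- arXiv:math/0101076 — 3 statements merged into one kernel-verified Lean document; each statement's English description precedes it below -/
import Mathlib

section
/- For every n ≥ d ≥ 2, the graph of the multiplex M^{d,n} contains a Hamiltonian cycle. -/
/-- Half of the adjacency relation of the graph of the multiplex `M^{d,n}`
(on vertex indices, with `a < b`): `b - a ≤ d - 2`, or `b = a + d`, or
`{a,b} = {0, d-1}`, or `{a,b} = {n-d+1, n}`. -/
def mAdj (d n a b : ℕ) : Prop :=
  a < b ∧ (b - a ≤ d - 2 ∨ b = a + d ∨ (a = 0 ∧ b = d - 1) ∨ (a = n - d + 1 ∧ b = n))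

/-- The graph of the multiplex `M^{d,n}`, on the vertices `x_0, …, x_n`. -/
def multiplexGraph (d n : ℕ) : SimpleGraph (Fin (n + 1)) where
  Adj a b := mAdj d n a.val b.val ∨ mAdj d n b.val a.val
  symm := ⟨by intro a b h; tauto⟩
  loopless := ⟨by
    intro a h
    rcases h with h | h <;> exact absurd h.1 (lt_irrefl _)⟩

/-!
Listing the vertices along a cyclic order in which consecutive vertices are adjacent gives
an injective copy of the cycle graph `C_{n+1}`, i.e. a Hamiltonian cycle. For `d ≠ 3` go up
through the even vertices and back down through the odd ones: steps of `2` are edges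
(`2 ≤ d - 2` for `d ≥ 4`, the long edges `{x_i, x_{i+d}}` for `d = 2`), and so are the turns
`{x_0, x_1}` and `{x_{n-1}, x_n}`. For `d = 3` the edges are the steps `1` and `3` together with
`{x_0, x_2}` and `{x_{n-2}, x_n}`: go up through the vertices `≡ 0, 1 (mod 4)`, come down
through those `≡ 2, 3 (mod 4)` and close with `{x_2, x_0}`; depending on `n mod 4` the turn at
the top is a step `1` or the edge `{x_{n-2}, x_n}`.
-/

open Function SimpleGraph

theorem SimpleGraph.exists_isHamiltonianCycle_of_adj_succ {V : Type*} [Fintype V]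
    [DecidableEq V] {G : SimpleGraph V} {N : ℕ} [NeZero N] (hN : 2 < N)
    (hcard : Fintype.card V = N) (f : Fin N → V) (hf : Injective f)
    (hadj : ∀ i, G.Adj (f i) (f (i + 1))) :
    ∃ (v : V) (p : G.Walk v v), p.IsHamiltonianCycle := by
  have hcopy : cycleGraph N ⊑ G := by
    refine ⟨⟨⟨f, fun {a b} hab => ?_⟩, hf⟩⟩
    have h1 : ((1 : Fin N) : ℕ) = 1 := by rw [Fin.val_one', Nat.mod_eq_of_lt (by omega)]
    rcases cycleGraph_adj'.mp hab with h | h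
    · rw [← h1, ← Fin.ext_iff, sub_eq_iff_eq_add, add_comm] at h
      exact h ▸ (hadj b).symm
    · rw [← h1, ← Fin.ext_iff, sub_eq_iff_eq_add, add_comm] at h
      exact h ▸ hadj a
  obtain ⟨v, p, hcyc, hlen⟩ := (cycleGraph_isContained_iff hN).mp hcopy
  exact ⟨v, p,
    Walk.isHamiltonianCycle_iff_isCycle_and_length_eq.mpr ⟨hcyc, hlen.trans hcard.symm⟩⟩

namespace Multiplex

/-- `σ i` is the `i`-th vertex of a Hamiltonian cycle of `M^{d,n}`. -/
structure IsHamiltonianOrder (d n : ℕ) (σ : ℕ → ℕ) : Prop where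
  mapsTo : Set.MapsTo σ (Set.Iic n) (Set.Iic n)
  injOn : Set.InjOn σ (Set.Iic n)
  adj_succ : ∀ i < n, mAdj d n (σ i) (σ (i + 1)) ∨ mAdj d n (σ (i + 1)) (σ i)
  adj_last_zero : mAdj d n (σ n) (σ 0) ∨ mAdj d n (σ 0) (σ n)

theorem IsHamiltonianOrder.exists_isHamiltonianCycle {d n : ℕ} {σ : ℕ → ℕ}
    (hσ : IsHamiltonianOrder d n σ) (hn : 2 ≤ n) :
    ∃ (v : Fin (n + 1)) (w : (multiplexGraph d n).Walk v v), w.IsHamiltonianCycle := by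
  refine exists_isHamiltonianCycle_of_adj_succ (by omega) (Fintype.card_fin _)
    (fun i => ⟨σ i, Nat.lt_succ_of_le (hσ.mapsTo (Nat.le_of_lt_succ i.2))⟩) ?_ fun i => ?_
  · intro i j hij
    exact Fin.ext <|
      hσ.injOn (Nat.le_of_lt_succ i.2) (Nat.le_of_lt_succ j.2) (Fin.mk.inj_iff.mp hij)
  · show mAdj d n (σ i) (σ (i + 1 : Fin (n + 1))) ∨ mAdj d n (σ (i + 1 : Fin (n + 1))) (σ i)
    rw [Fin.val_add_one]
    split_ifs with hi
    · rw [hi, Fin.val_last]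
      exact hσ.adj_last_zero
    · exact hσ.adj_succ i (Fin.val_lt_last hi)

/-- Visits the even vertices upwards, then the odd ones downwards. -/
def evenOddOrder (n i : ℕ) : ℕ :=
  if i ≤ n / 2 then 2 * i else 2 * (n - i) + 1

/-- Visits the vertices `≡ 0, 1 (mod 4)` upwards, then those `≡ 2, 3 (mod 4)` downwards;
`n / 4 + (n + 3) / 4` is the position of the last upward vertex. -/
def mod4Order (n i : ℕ) : ℕ :=
  if i ≤ n / 4 + (n + 3) / 4 then 2 * i - i % 2 else 2 * (n - i) + 2 - (n - i) % 2

theorem isHamiltonianOrder_evenOddOrder {d n : ℕ} (hd : 2 ≤ d) (hd3 : d ≠ 3) (hn : 2 ≤ n) :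
    IsHamiltonianOrder d n (evenOddOrder n) where
  mapsTo i hi := by simp only [Set.mem_Iic, evenOddOrder] at hi ⊢; split_ifs <;> omega
  injOn i hi j hj hij := by
    simp only [Set.mem_Iic, evenOddOrder] at hi hj hij; split_ifs at hij <;> omega
  adj_succ i hi := by simp only [mAdj, evenOddOrder]; split_ifs <;> omega
  adj_last_zero := by simp only [mAdj, evenOddOrder]; split_ifs <;> omega

theorem isHamiltonianOrder_mod4Order {n : ℕ} (hn : 3 ≤ n) :
    IsHamiltonianOrder 3 n (mod4Order n) where
  mapsTo i hi := by
    simp only [Set.mem_Iic, mod4Order] at hi ⊢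
    rcases (by omega : n % 4 = 0 ∨ n % 4 = 1 ∨ n % 4 = 2 ∨ n % 4 = 3) with h | h | h | h <;>
      split_ifs <;> omega
  injOn i hi j hj hij := by
    simp only [Set.mem_Iic, mod4Order] at hi hj hij; split_ifs at hij <;> omega
  adj_succ i hi := by simp only [mAdj, mod4Order]; split_ifs <;> omega
  adj_last_zero := by simp only [mAdj, mod4Order]; split_ifs <;> omega

end Multiplex

/-- For every `n ≥ d ≥ 2`, the graph of the multiplex `M^{d,n}` contains a
Hamiltonian cycle. -/
theorem multiplex_hamiltonian (d n : ℕ) (hd : 2 ≤ d) (hdn : d ≤ n) :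
    ∃ (v : Fin (n + 1)) (w : (multiplexGraph d n).Walk v v),
      w.IsHamiltonianCycle := by
  have hn : 2 ≤ n := hd.trans hdn
  rcases eq_or_ne d 3 with rfl | hd3
  · exact (Multiplex.isHamiltonianOrder_mod4Order hdn).exists_isHamiltonianCycle hn
  · exact (Multiplex.isHamiltonianOrder_evenOddOrder hd hd3 hn).exists_isHamiltonianCycle hn
end

section
/- For every n ≥ d ≥ 2, the diameter of the graph of the multiplex M^{d,n} is ⌈n/d⌉. -/
/-!
Every edge joins vertices whose indices differ by at most `d`, so a walk from `x_0` to `x_n`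
has at least `⌈n/d⌉` edges. Conversely, for `u ≤ v`, jumps of length `d` followed by one step
of length at most `d - 2` reach `x_v` from `x_u` within `⌈n/d⌉` steps unless
`v - u ≡ d - 1 (mod d)`. In that case, jump down to `x_{u % d}`, cross the clique
`x_0, …, x_{d-1}` (its only long edge is `{x_0, x_{d-1}}`) and jump up to `x_v`; this is short
enough when `u + v ≤ n`, and the reflection `x_i ↦ x_{n-i}` is an automorphism, so one may
assume that.
-/

open SimpleGraph

theorem Nat.lt_ceil_div_iff_mul_lt {α : Type*} [Field α] [LinearOrder α] [IsStrictOrderedRing α]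
    [FloorSemiring α] {m n d : ℕ} (hd : 0 < d) : m < ⌈(n : α) / d⌉₊ ↔ m * d < n := by
  rw [Nat.lt_ceil, lt_div_iff₀ (by exact_mod_cast hd)]
  exact_mod_cast Iff.rfl

theorem Nat.ceil_div_le_iff_le_mul {α : Type*} [Field α] [LinearOrder α] [IsStrictOrderedRing α]
    [FloorSemiring α] {m n d : ℕ} (hd : 0 < d) :
    ⌈(n : α) / d⌉₊ ≤ m ↔ n ≤ m * d := by
  simpa only [not_lt] using (Nat.lt_ceil_div_iff_mul_lt (α := α) (m := m) (n := n) hd).not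

namespace SimpleGraph

variable {V W : Type*} {G : SimpleGraph V} {H : SimpleGraph W}

theorem le_edist_of_le_length {u v : V} {k : ℕ∞} (h : ∀ p : G.Walk u v, k ≤ p.length) :
    k ≤ G.edist u v :=
  le_sInf <| by rintro _ ⟨p, rfl⟩; exact h p

theorem edist_le_add_of_le {u v w : V} {a b : ℕ} (huv : G.edist u v ≤ a)
    (hvw : G.edist v w ≤ b) : G.edist u w ≤ (a + b : ℕ) :=
  G.edist_triangle.trans <| by push_cast; exact add_le_add huv hvw

theorem Hom.edist_le (f : G →g H) (u v : V) : H.edist (f u) (f v) ≤ G.edist u v :=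
  le_edist_of_le_length fun p => (SimpleGraph.edist_le (p.map f)).trans_eq (by rw [Walk.length_map])

end SimpleGraph

section Multiplex

variable {d n : ℕ}

theorem multiplexGraph_val_le_add_mul_length {u v : Fin (n + 1)}
    (p : (multiplexGraph d n).Walk u v) : v.val ≤ u.val + p.length * d := by
  induction p with
  | nil => simp
  | cons h _ ih =>
    rw [Walk.length_cons, Nat.succ_mul]
    simp only [multiplexGraph, mAdj] at h
    omega

theorem multiplexGraph_adj_rev (hdn : d ≤ n + 1) {u v : Fin (n + 1)}
    (h : (multiplexGraph d n).Adj u v) : (multiplexGraph d n).Adj u.rev v.rev := by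
  simp only [multiplexGraph, mAdj, Fin.val_rev] at h ⊢
  omega

theorem multiplexGraph_edist_rev (hdn : d ≤ n + 1) (u v : Fin (n + 1)) :
    (multiplexGraph d n).edist u.rev v.rev = (multiplexGraph d n).edist u v :=
  let f : multiplexGraph d n →g multiplexGraph d n := ⟨Fin.rev, multiplexGraph_adj_rev hdn⟩
  le_antisymm (f.edist_le u v) (by simpa [f] using f.edist_le u.rev v.rev)

theorem multiplexGraph_edist_le_one {u v : Fin (n + 1)}
    (h : u.val = v.val ∨ mAdj d n u.val v.val ∨ mAdj d n v.val u.val) :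
    (multiplexGraph d n).edist u v ≤ 1 := by
  rcases h with h | h
  · simp [Fin.ext h]
  · exact edist_le_one_iff_adj_or_eq.2 (Or.inl h)

theorem multiplexGraph_edist_le_of_val_eq_add_mul (hd : 0 < d) {u v : Fin (n + 1)} {k : ℕ}
    (h : v.val = u.val + k * d) : (multiplexGraph d n).edist u v ≤ k := by
  induction k generalizing v with
  | zero => simp [Fin.ext (by simpa using h)]
  | succ k ih =>
    have hv := v.isLt
    rw [Nat.succ_mul] at h
    let w : Fin (n + 1) := ⟨u.val + k * d, by omega⟩
    exact edist_le_add_of_le (ih (v := w) rfl)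
      (multiplexGraph_edist_le_one (by simp only [w, mAdj]; omega))

theorem multiplexGraph_edist_le_of_mod_le (hd : 0 < d) {u v : Fin (n + 1)} (huv : u ≤ v)
    (hr : (v.val - u.val) % d ≤ d - 2) {m : ℕ} (hm : v.val - u.val ≤ m * d) :
    (multiplexGraph d n).edist u v ≤ m := by
  have hdiv := Nat.div_add_mod' (v.val - u.val) d
  set k := (v.val - u.val) / d
  have hv := v.isLt
  rw [Fin.le_def] at huv
  let w : Fin (n + 1) := ⟨u.val + k * d, by omega⟩
  have huw : (multiplexGraph d n).edist u w ≤ k :=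
    multiplexGraph_edist_le_of_val_eq_add_mul hd rfl
  rcases Nat.eq_zero_or_pos ((v.val - u.val) % d) with hr0 | hr0
  · have hwv : w = v := Fin.ext (by simp only [w]; omega)
    exact hwv ▸ huw.trans (Nat.cast_le.2 (Nat.le_of_mul_le_mul_right (by omega) hd))
  · have hkm : k < m := Nat.lt_of_mul_lt_mul_right (a := d) (by omega)
    refine (edist_le_add_of_le huw (multiplexGraph_edist_le_one (v := v) ?_)).trans
      (Nat.cast_le.2 hkm)
    simp only [w, mAdj]
    omega

-- Jump down from `x_u` to `x_{u % d}`, cross the clique `x_0, …, x_{d-1}`, jump up to `x_v`.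
theorem multiplexGraph_edist_le_div_add_one_add_div (hd : 0 < d) (u v : Fin (n + 1)) :
    (multiplexGraph d n).edist u v ≤ (u.val / d + 1 + v.val / d : ℕ) := by
  have hu := Nat.mod_add_div' u.val d
  have hv := Nat.mod_add_div' v.val d
  have hud := Nat.mod_lt u.val hd
  have hvd := Nat.mod_lt v.val hd
  let u₀ : Fin (n + 1) := ⟨u.val % d, by omega⟩
  let v₀ : Fin (n + 1) := ⟨v.val % d, by omega⟩
  have huu₀ : (multiplexGraph d n).edist u u₀ ≤ (u.val / d : ℕ) := by
    rw [edist_comm]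
    exact multiplexGraph_edist_le_of_val_eq_add_mul hd hu.symm
  have hu₀v₀ : (multiplexGraph d n).edist u₀ v₀ ≤ 1 :=
    multiplexGraph_edist_le_one (by simp only [u₀, v₀, mAdj]; omega)
  have hv₀v : (multiplexGraph d n).edist v₀ v ≤ (v.val / d : ℕ) :=
    multiplexGraph_edist_le_of_val_eq_add_mul hd hv.symm
  exact edist_le_add_of_le (edist_le_add_of_le huu₀ (by exact_mod_cast hu₀v₀)) hv₀v

theorem multiplexGraph_edist_le_ceil_of_add_le (hd : 0 < d) {u v : Fin (n + 1)} (huv : u ≤ v)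
    (hsum : u.val + v.val ≤ n) : (multiplexGraph d n).edist u v ≤ ⌈(n : ℚ) / d⌉₊ := by
  rw [Fin.le_def] at huv
  by_cases hr : (v.val - u.val) % d ≤ d - 2
  · have hn := (Nat.ceil_div_le_iff_le_mul (α := ℚ) (m := ⌈(n : ℚ) / d⌉₊) hd).1 le_rfl
    exact multiplexGraph_edist_le_of_mod_le hd huv hr (by omega)
  · -- Different residues make `u / d * d + v / d * d < u + v`.
    have hmod : u.val % d ≠ v.val % d := fun h =>
      hr (by rw [Nat.sub_mod_eq_zero_of_mod_eq h.symm]; omega)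
    have hu := Nat.mod_add_div' u.val d
    have hv := Nat.mod_add_div' v.val d
    refine (multiplexGraph_edist_le_div_add_one_add_div hd u v).trans (Nat.cast_le.2 ?_)
    rw [add_right_comm, Nat.add_one_le_iff, Nat.lt_ceil_div_iff_mul_lt hd, Nat.add_mul]
    omega

theorem multiplexGraph_edist_le_ceil (hd : 0 < d) (hdn : d ≤ n + 1) (u v : Fin (n + 1)) :
    (multiplexGraph d n).edist u v ≤ ⌈(n : ℚ) / d⌉₊ := by
  wlog huv : u ≤ v generalizing u v
  · rw [edist_comm]
    exact this v u (le_of_not_ge huv)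
  rcases le_or_gt (u.val + v.val) n with hsum | hsum
  · exact multiplexGraph_edist_le_ceil_of_add_le hd huv hsum
  · rw [← multiplexGraph_edist_rev hdn, edist_comm]
    refine multiplexGraph_edist_le_ceil_of_add_le hd (Fin.rev_le_rev.2 huv) ?_
    simp only [Fin.val_rev]
    omega

theorem ceil_div_le_multiplexGraph_edist_zero_last (hd : 0 < d) :
    (⌈(n : ℚ) / d⌉₊ : ℕ∞) ≤ (multiplexGraph d n).edist 0 (Fin.last n) :=
  le_edist_of_le_length fun p => by
    have := multiplexGraph_val_le_add_mul_length p
    simp only [Fin.val_last, Fin.val_zero, zero_add] at this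
    exact_mod_cast (Nat.ceil_div_le_iff_le_mul hd).2 this

end Multiplex

/-- For every `n ≥ d ≥ 2`, the diameter of the graph of the multiplex `M^{d,n}`
is `⌈n / d⌉`. -/
theorem multiplex_diameter (d n : ℕ) (hd : 2 ≤ d) (hdn : d ≤ n) :
    (multiplexGraph d n).diam = ⌈(n : ℚ) / (d : ℚ)⌉₊ := by
  have hd₀ : 0 < d := by omega
  have hediam : (multiplexGraph d n).ediam = ⌈(n : ℚ) / d⌉₊ :=
    le_antisymm (ediam_le_of_edist_le (multiplexGraph_edist_le_ceil hd₀ (by omega)))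
      ((ceil_div_le_multiplexGraph_edist_zero_last hd₀).trans edist_le_ediam)
  rw [diam, hediam, ENat.toNat_natCast]
end

section
/- For n ≥ k ≥ d = 2m+1 ≥ 5, the chromatic number of the graph of the ordinary polytope P^{d,k,n} equals k if n > k, and k+1 if n = k. -/
/-- Half of the adjacency relation of the graph of the ordinary polytope
`P^{d,k,n}` (on vertex indices, with `a < b`): `b - a ≤ k - 2`, or `b = a + k`,
or `{a,b} = {0, k-1}`, or `{a,b} = {n-k+1, n}`. -/
def oAdj (k n a b : ℕ) : Prop :=
  a < b ∧ (b - a ≤ k - 2 ∨ b = a + k ∨ (a = 0 ∧ b = k - 1) ∨ (a = n - k + 1 ∧ b = n))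

/-- The graph of the ordinary polytope `P^{d,k,n}`, on the vertices `x_0, …, x_n`. -/
def ordinaryGraph (k n : ℕ) : SimpleGraph (Fin (n + 1)) where
  Adj a b := oAdj k n a.val b.val ∨ oAdj k n b.val a.val
  symm := ⟨by intro a b h; exact Or.symm h⟩
  loopless := ⟨by
    intro a h
    rcases h with h | h <;> exact absurd h.1 (lt_irrefl _)⟩

/-!
The first `k` vertices form a clique, and for `n = k` the graph is complete. For `n > k`,
colour the inner vertices `x_i` by `i mod (k - 1)` and both ends `x_0, x_n` by the extra
colour `k - 1`: inner neighbours differ by at most `k - 2` or by `k ≡ 1 (mod k - 1)`, and the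
two ends are not adjacent.
-/

open SimpleGraph

namespace ordinaryGraph

variable {k n : ℕ}

lemma adj_of_lt {u v : Fin (n + 1)} (huv : u ≠ v) (hu : u.val < k) (hv : v.val < k) :
    (ordinaryGraph k n).Adj u v := by
  rcases Fin.lt_or_lt_of_ne huv with h | h
  · exact Or.inl ⟨h, by omega⟩
  · exact Or.inr ⟨h, by omega⟩

theorem self_eq_top (k : ℕ) : ordinaryGraph k k = ⊤ := by
  ext u v
  refine ⟨(ordinaryGraph k k).ne_of_adj, fun huv => ?_⟩
  have := u.isLt
  have := v.isLt
  rcases Fin.lt_or_lt_of_ne huv with h | h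
  · exact Or.inl ⟨h, by omega⟩
  · exact Or.inr ⟨h, by omega⟩

theorem isClique_Iio (hkn : k ≤ n) :
    (ordinaryGraph k n).IsClique (Finset.Iio (⟨k, by omega⟩ : Fin (n + 1)) : Set (Fin (n + 1))) :=
  fun _ hu _ hv huv =>
    adj_of_lt huv (by simpa [Fin.lt_def] using hu) (by simpa [Fin.lt_def] using hv)

lemma mod_ne_of_oAdj (hk : 3 ≤ k) {a b : ℕ} (h : oAdj k n a b) (ha : a ≠ 0) (hb : b ≠ n) :
    a % (k - 1) ≠ b % (k - 1) := by
  obtain ⟨hab, hcases⟩ := h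
  intro hmod
  have hdvd : k - 1 ∣ b - a := (Nat.modEq_iff_dvd' hab.le).mp hmod
  rcases hcases with hclose | hfar | hfirst | hlast
  · have := Nat.le_of_dvd (by omega) hdvd
    omega
  · rw [show b - a = k - 1 + 1 by omega, Nat.dvd_add_right dvd_rfl, Nat.dvd_one] at hdvd
    omega
  · exact ha hfirst.1
  · exact hb hlast.2

def color (k n i : ℕ) : ℕ := if i = 0 ∨ i = n then k - 1 else i % (k - 1)

lemma color_lt (hk : 3 ≤ k) (i : ℕ) : color k n i < k := by
  unfold color
  split
  · omega
  · have := Nat.mod_lt i (show 0 < k - 1 by omega)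
    omega

lemma color_ne_of_oAdj (hk : 3 ≤ k) (hkn : k < n) {a b : ℕ} (hbn : b ≤ n) (h : oAdj k n a b) :
    color k n a ≠ color k n b := by
  have hmod : ∀ i, i % (k - 1) < k - 1 := fun i => Nat.mod_lt i (by omega)
  unfold color
  by_cases ha : a = 0 ∨ a = n <;> by_cases hb : b = 0 ∨ b = n
  · unfold oAdj at h
    omega
  · rw [if_pos ha, if_neg hb]
    exact (hmod b).ne'
  · rw [if_neg ha, if_pos hb]
    exact (hmod a).ne
  · rw [if_neg ha, if_neg hb]
    exact mod_ne_of_oAdj hk h (by omega) (by omega)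

theorem colorable (hk : 3 ≤ k) (hkn : k < n) : (ordinaryGraph k n).Colorable k := by
  refine (colorable_iff_exists_bdd_nat_coloring k).mpr
    ⟨Coloring.mk (fun v => color k n v) fun {u v} huv => ?_, fun v => color_lt hk v⟩
  rcases huv with h | h
  · exact color_ne_of_oAdj hk hkn v.is_le h
  · exact (color_ne_of_oAdj hk hkn u.is_le h).symm

theorem chromaticNumber_of_lt (hk : 3 ≤ k) (hkn : k < n) :
    (ordinaryGraph k n).chromaticNumber = k := by
  refine le_antisymm (colorable hk hkn).chromaticNumber_le ?_
  simpa using (isClique_Iio hkn.le).card_le_chromaticNumber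

theorem chromaticNumber_self (k : ℕ) : (ordinaryGraph k k).chromaticNumber = k + 1 := by
  simp [self_eq_top, chromaticNumber_top]

end ordinaryGraph

theorem ordinary_chromatic_number_general (d k n : ℕ)
    (hd5 : 5 ≤ d) (hdk : d ≤ k) (hkn : k ≤ n) :
    (ordinaryGraph k n).chromaticNumber =
      if k < n then (k : ℕ∞) else (k : ℕ∞) + 1 := by
  split_ifs with hlt
  · exact ordinaryGraph.chromaticNumber_of_lt (by omega) hlt
  · obtain rfl : n = k := by omega
    exact ordinaryGraph.chromaticNumber_self _

/-- For `n ≥ k ≥ d = 2m+1 ≥ 5`, the chromatic number of the graph of the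
ordinary polytope `P^{d,k,n}` is `k` if `n > k`, and `k + 1` if `n = k`. -/
theorem ordinary_chromatic_number (d k n m : ℕ) (hdm : d = 2 * m + 1)
    (hd5 : 5 ≤ d) (hdk : d ≤ k) (hkn : k ≤ n) :
    (ordinaryGraph k n).chromaticNumber =
      if k < n then (k : ℕ∞) else (k : ℕ∞) + 1 :=
  ordinary_chromatic_number_general d k n hd5 hdk hkn
end
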